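/- arXiv:2501.01882 — 5 statements merged into one kernel-verified Lean document; each statement's English description precedes it below -/
import Mathlib

section
/- Given a matched pair of monoids (G, H; ⊗, ⊙) and left actions α : H × X → X of H and β : G × X → X of G on a set X satisfying β(g, α(h, x)) = α(g ⊗ h, β(g ⊙ h, x)) for all g, h, x, the map (h, g) ⋆ x := α(h, β(g, x)) defines a left action of the bicrossed product H ⋈ G on X. -/
/-- Bicrossed product multiplication on `H × G`. -/
def bmul {G H : Type*} [Monoid G] [Monoid H] (ot : G → H → H) (od : G → H → G)
    (p q : H × G) : H × G := (p.1 * ot p.2 q.1, od p.2 q.1 * q.2)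

theorem matched_actions_give_bicrossed_action_general {G H X : Type*} [Monoid G] [Monoid H]
    (ot : G → H → H) (od : G → H → G)
    (α : H → X → X) (β : G → X → X)
    (hα_one : ∀ x, α 1 x = x)
    (hα_mul : ∀ h h' x, α (h * h') x = α h (α h' x))
    (hβ_one : ∀ x, β 1 x = x)
    (hβ_mul : ∀ g g' x, β (g * g') x = β g (β g' x))
    (compat : ∀ g h x, β g (α h x) = α (ot g h) (β (od g h) x)) :
    (∀ x : X, α (1 : H) (β (1 : G) x) = x) ∧
    (∀ (p q : H × G) (x : X),
      α (bmul ot od p q).1 (β (bmul ot od p q).2 x) =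
        α p.1 (β p.2 (α q.1 (β q.2 x)))) := by
  refine ⟨fun x => by rw [hβ_one, hα_one], fun ⟨h, g⟩ ⟨h', g'⟩ x => ?_⟩
  calc α (h * ot g h') (β (od g h' * g') x)
      = α h (α (ot g h') (β (od g h') (β g' x))) := by rw [hα_mul, hβ_mul]
    _ = α h (β g (α h' (β g' x))) := by rw [compat]

theorem matched_actions_give_bicrossed_action {G H X : Type*} [Monoid G] [Monoid H]
    (ot : G → H → H) (od : G → H → G)
    (hot_one : ∀ h, ot 1 h = h)
    (hot_mul : ∀ g g' h, ot (g * g') h = ot g (ot g' h))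
    (hod_one : ∀ g, od g 1 = g)
    (hod_mul : ∀ g h h', od g (h * h') = od (od g h) h')
    (hot_triv : ∀ g, ot g 1 = 1)
    (hod_triv : ∀ h, od 1 h = 1)
    (bc1 : ∀ g h h', ot g (h * h') = ot g h * ot (od g h) h')
    (bc2 : ∀ g g' h, od (g * g') h = od g (ot g' h) * od g' h)
    (α : H → X → X) (β : G → X → X)
    (hα_one : ∀ x, α 1 x = x)
    (hα_mul : ∀ h h' x, α (h * h') x = α h (α h' x))
    (hβ_one : ∀ x, β 1 x = x)
    (hβ_mul : ∀ g g' x, β (g * g') x = β g (β g' x))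
    (compat : ∀ g h x, β g (α h x) = α (ot g h) (β (od g h) x)) :
    (∀ x : X, α (1 : H) (β (1 : G) x) = x) ∧
    (∀ (p q : H × G) (x : X),
      α (bmul ot od p q).1 (β (bmul ot od p q).2 x) =
        α p.1 (β p.2 (α q.1 (β q.2 x)))) :=
  matched_actions_give_bicrossed_action_general ot od α β hα_one hα_mul hβ_one hβ_mul compat
end

section
/- Universal property of the bicrossed product: given a monoid N and monoid homomorphisms u_H : H → N and u_G : G → N such that u_G(g) * u_H(h) = u_H(g ⊗ h) * u_G(g ⊙ h) for all g, h, there exists a unique monoid homomorphism φ : H ⋈ G → N with φ ∘ i_H = u_H and φ ∘ i_G = u_G (namely φ(h, g) = u_H(h) * u_G(g)). -/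
section Bicrossed

variable {G H N : Type*} [Monoid G] [Monoid H] [Monoid N] (ot : G → H → H) (od : G → H → G)

theorem bmul_mk_one_one_mk (hot : ot 1 1 = 1) (hod : od 1 1 = 1) (h : H) (g : G) :
    bmul ot od (h, 1) (1, g) = (h, g) := by
  simp [bmul, hot, hod]

theorem mul_map_bmul {uH : H → N} {uG : G → N}
    (huH_mul : ∀ h h', uH (h * h') = uH h * uH h') (huG_mul : ∀ g g', uG (g * g') = uG g * uG g')
    (hcomm : ∀ g h, uG g * uH h = uH (ot g h) * uG (od g h)) (p q : H × G) :
    uH (bmul ot od p q).1 * uG (bmul ot od p q).2 = (uH p.1 * uG p.2) * (uH q.1 * uG q.2) := by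
  obtain ⟨h, g⟩ := p
  obtain ⟨h', g'⟩ := q
  calc uH (h * ot g h') * uG (od g h' * g')
      = uH h * (uH (ot g h') * uG (od g h')) * uG g' := by
        simp only [huH_mul, huG_mul, mul_assoc]
    _ = uH h * uG g * (uH h' * uG g') := by
        rw [← hcomm]; simp only [mul_assoc]

theorem eq_mul_of_map_bmul (hot : ot 1 1 = 1) (hod : od 1 1 = 1) {uH : H → N} {uG : G → N}
    {φ : H × G → N} (hφ : ∀ p q, φ (bmul ot od p q) = φ p * φ q)
    (hH : ∀ h, φ (h, 1) = uH h) (hG : ∀ g, φ (1, g) = uG g) :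
    φ = fun p => uH p.1 * uG p.2 := by
  funext ⟨h, g⟩
  rw [← hH, ← hG, ← hφ, bmul_mk_one_one_mk ot od hot hod]

end Bicrossed

theorem bicrossed_universal_property_general {G H N : Type*} [Monoid G] [Monoid H] [Monoid N]
    (ot : G → H → H) (od : G → H → G)
    (hot_triv : ∀ g, ot g 1 = 1)
    (hod_triv : ∀ h, od 1 h = 1)
    (uH : H → N) (uG : G → N)
    (huH_one : uH 1 = 1) (huH_mul : ∀ h h', uH (h * h') = uH h * uH h')
    (huG_one : uG 1 = 1) (huG_mul : ∀ g g', uG (g * g') = uG g * uG g')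
    (hcomm : ∀ (g : G) (h : H), uG g * uH h = uH (ot g h) * uG (od g h)) :
    (∃! φ : H × G → N,
      (φ ((1 : H), (1 : G)) = 1 ∧ ∀ p q, φ (bmul ot od p q) = φ p * φ q) ∧
      (∀ h : H, φ (h, 1) = uH h) ∧ (∀ g : G, φ (1, g) = uG g)) ∧
    -- namely, φ (h, g) = uH h * uG g works
    ((fun p : H × G => uH p.1 * uG p.2) ((1 : H), (1 : G)) = 1 ∧
      (∀ p q, uH (bmul ot od p q).1 * uG (bmul ot od p q).2 =
        (uH p.1 * uG p.2) * (uH q.1 * uG q.2)) ∧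
      (∀ h : H, uH h * uG 1 = uH h) ∧ (∀ g : G, uH 1 * uG g = uG g)) := by
  have hmap_one : uH 1 * uG 1 = 1 := by rw [huH_one, huG_one, one_mul]
  have hmap_bmul := mul_map_bmul ot od huH_mul huG_mul hcomm
  have hH (h : H) : uH h * uG 1 = uH h := by rw [huG_one, mul_one]
  have hG (g : G) : uH 1 * uG g = uG g := by rw [huH_one, one_mul]
  refine ⟨⟨fun p => uH p.1 * uG p.2, ⟨⟨hmap_one, hmap_bmul⟩, hH, hG⟩, ?_⟩,
    hmap_one, hmap_bmul, hH, hG⟩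
  rintro φ ⟨⟨-, hφ⟩, hφH, hφG⟩
  exact eq_mul_of_map_bmul ot od (hot_triv 1) (hod_triv 1) hφ hφH hφG

theorem bicrossed_universal_property {G H N : Type*} [Monoid G] [Monoid H] [Monoid N]
    (ot : G → H → H) (od : G → H → G)
    (hot_one : ∀ h, ot 1 h = h)
    (hot_mul : ∀ g g' h, ot (g * g') h = ot g (ot g' h))
    (hod_one : ∀ g, od g 1 = g)
    (hod_mul : ∀ g h h', od g (h * h') = od (od g h) h')
    (hot_triv : ∀ g, ot g 1 = 1)
    (hod_triv : ∀ h, od 1 h = 1)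
    (bc1 : ∀ g h h', ot g (h * h') = ot g h * ot (od g h) h')
    (bc2 : ∀ g g' h, od (g * g') h = od g (ot g' h) * od g' h)
    (uH : H → N) (uG : G → N)
    (huH_one : uH 1 = 1) (huH_mul : ∀ h h', uH (h * h') = uH h * uH h')
    (huG_one : uG 1 = 1) (huG_mul : ∀ g g', uG (g * g') = uG g * uG g')
    (hcomm : ∀ (g : G) (h : H), uG g * uH h = uH (ot g h) * uG (od g h)) :
    (∃! φ : H × G → N,
      (φ ((1 : H), (1 : G)) = 1 ∧ ∀ p q, φ (bmul ot od p q) = φ p * φ q) ∧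
      (∀ h : H, φ (h, 1) = uH h) ∧ (∀ g : G, φ (1, g) = uG g)) ∧
    -- namely, φ (h, g) = uH h * uG g works
    ((fun p : H × G => uH p.1 * uG p.2) ((1 : H), (1 : G)) = 1 ∧
      (∀ p q, uH (bmul ot od p q).1 * uG (bmul ot od p q).2 =
        (uH p.1 * uG p.2) * (uH q.1 * uG q.2)) ∧
      (∀ h : H, uH h * uG 1 = uH h) ∧ (∀ g : G, uH 1 * uG g = uG g)) :=
  bicrossed_universal_property_general ot od hot_triv hod_triv uH uG huH_one huH_mul huG_one huG_mul
    hcomm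
end

section
/- Under the monad axioms for (E, d, s) over A, the map ⊙⁺ is a right action of the monoid E on List A: as ⊙⁺ e₀ = as and as ⊙⁺ (e · e') = (as ⊙⁺ e) ⊙⁺ e', for every list as and e, e' ∈ E. Moreover, the identity list is a fixed point: [] ⊙⁺ e = []. -/
/-!
Both identities follow by induction on the list, once one knows that `dPlus d` inherits the
cocycle laws of `d`: `dPlus d as 1 = 1` and
`dPlus d as (e * e') = dPlus d as e * dPlus d (odPlus d s as e) e'`.
The head of `odPlus d s as e` is `s` applied at `dPlus d as e`, so these are exactly what the
axioms for `s` need.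
-/

/-- Canonical extension of `d : A → E → E` to lists. -/
def dPlus {A E : Type*} (d : A → E → E) : List A → E → E
  | [], e => e
  | a :: as, e => d a (dPlus d as e)

/-- Canonical extension of `s` to a map `List A × E → List A`. -/
def odPlus {A E : Type*} (d : A → E → E) (s : A → E → A) : List A → E → List A
  | [], _ => []
  | a :: as, e => s a (dPlus d as e) :: odPlus d s as e

section

variable {A E : Type*} (d : A → E → E) (s : A → E → A)

theorem dPlus_one [One E] (hd1 : ∀ a : A, d a 1 = 1) (as : List A) : dPlus d as 1 = 1 := by
  induction as with
  | nil => rfl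
  | cons a as ih => rw [dPlus, ih, hd1]

theorem dPlus_mul [Mul E] (hd2 : ∀ (a : A) (e e' : E), d a (e * e') = d a e * d (s a e) e')
    (as : List A) (e e' : E) :
    dPlus d as (e * e') = dPlus d as e * dPlus d (odPlus d s as e) e' := by
  induction as with
  | nil => rfl
  | cons a as ih => rw [odPlus, dPlus, dPlus, dPlus, ih, hd2]

theorem odPlus_one [One E] (hs1 : ∀ a : A, s a 1 = a) (hd1 : ∀ a : A, d a 1 = 1)
    (as : List A) : odPlus d s as 1 = as := by
  induction as with
  | nil => rfl
  | cons a as ih => rw [odPlus, ih, dPlus_one d hd1, hs1]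

theorem odPlus_mul [Mul E] (hs2 : ∀ (a : A) (e e' : E), s a (e * e') = s (s a e) e')
    (hd2 : ∀ (a : A) (e e' : E), d a (e * e') = d a e * d (s a e) e')
    (as : List A) (e e' : E) :
    odPlus d s as (e * e') = odPlus d s (odPlus d s as e) e' := by
  induction as with
  | nil => rfl
  | cons a as ih => rw [odPlus, odPlus, odPlus, ih, dPlus_mul d s hd2, hs2]

end

theorem odPlus_is_right_action {A E : Type*} [Monoid E]
    (d : A → E → E) (s : A → E → A)
    (hs1 : ∀ a : A, s a 1 = a)
    (hd1 : ∀ a : A, d a 1 = 1)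
    (hs2 : ∀ (a : A) (e e' : E), s a (e * e') = s (s a e) e')
    (hd2 : ∀ (a : A) (e e' : E), d a (e * e') = d a e * d (s a e) e') :
    (∀ as : List A, odPlus d s as 1 = as) ∧
    (∀ (as : List A) (e e' : E),
      odPlus d s as (e * e') = odPlus d s (odPlus d s as e) e') ∧
    (∀ e : E, odPlus d s [] e = []) :=
  ⟨odPlus_one d s hs1 hd1, odPlus_mul d s hs2 hd2, fun _ => rfl⟩
end

section
/- Cotabulator of a Mealy automaton in Mly(Set): for (E, d, s) : A ⇸ B, let q : A ⊕ B → T be the coequalizer (quotient) of the two maps A × E → A ⊕ B given by (a,e) ↦ inl(a) and (a,e) ↦ inr(s(a,e)). Then the pair of functions (q ∘ inl : A → T, q ∘ inr : B → T) together with the unique map E → Unit forms a cell from (E,d,s) to the loose identity on T, and it is universal: every cell from (E,d,s) to a loose identity on a set X along p : A → X, r : B → X factors through a unique function T → X. -/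
/-- The cotabulator relation on `A ⊕ B`: `inl a ~ inr (s a e)`. -/
def cotabRel {A B E : Type*} (s : A → E → B) (x y : A ⊕ B) : Prop :=
  ∃ (a : A) (e : E), x = Sum.inl a ∧ y = Sum.inr (s a e)

theorem Quot.funext_sum {A B X : Type*} {R : A ⊕ B → A ⊕ B → Prop} {t t' : Quot R → X}
    (hl : ∀ a, t (Quot.mk R (Sum.inl a)) = t' (Quot.mk R (Sum.inl a)))
    (hr : ∀ b, t (Quot.mk R (Sum.inr b)) = t' (Quot.mk R (Sum.inr b))) : t = t' :=
  funext <| Quot.ind <| Sum.rec hl hr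

theorem cotabRel.mk_inr_eq_mk_inl {A B E : Type*} (s : A → E → B) (a : A) (e : E) :
    Quot.mk (cotabRel s) (Sum.inr (s a e)) = Quot.mk (cotabRel s) (Sum.inl a) :=
  (Quot.sound ⟨a, e, rfl, rfl⟩).symm

def cotabRel.lift {A B E X : Type*} {s : A → E → B} (p : A → X) (r : B → X)
    (h : ∀ a e, r (s a e) = p a) : Quot (cotabRel s) → X :=
  Quot.lift (Sum.elim p r) fun _ _ ⟨a, e, hx, hy⟩ => hx ▸ hy ▸ (h a e).symm

theorem mealy_cotabulator_general {A B E : Type*} (s : A → E → B) :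
    -- the pair (q ∘ inl, q ∘ inr) forms a cell from (E, d, s) to the loose
    -- identity on T = Quot (cotabRel s):
    (∀ (a : A) (e : E),
      Quot.mk (cotabRel s) (Sum.inr (s a e)) = Quot.mk (cotabRel s) (Sum.inl a)) ∧
    -- universality: every cell from (E, d, s) to a loose identity on X
    -- along p : A → X, r : B → X factors through a unique map T → X
    (∀ (X : Type*) (p : A → X) (r : B → X),
      (∀ (a : A) (e : E), r (s a e) = p a) →
      ∃! t : Quot (cotabRel s) → X,
        (∀ a : A, t (Quot.mk (cotabRel s) (Sum.inl a)) = p a) ∧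
        (∀ b : B, t (Quot.mk (cotabRel s) (Sum.inr b)) = r b)) :=
  ⟨cotabRel.mk_inr_eq_mk_inl s, fun _ p r h =>
    ⟨cotabRel.lift p r h, ⟨fun _ => rfl, fun _ => rfl⟩,
      fun _ ⟨hl, hr⟩ => Quot.funext_sum hl hr⟩⟩

theorem mealy_cotabulator {A B E : Type*} (d : A → E → E) (s : A → E → B) :
    -- the pair (q ∘ inl, q ∘ inr) forms a cell from (E, d, s) to the loose
    -- identity on T = Quot (cotabRel s):
    (∀ (a : A) (e : E),
      Quot.mk (cotabRel s) (Sum.inr (s a e)) = Quot.mk (cotabRel s) (Sum.inl a)) ∧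
    -- universality: every cell from (E, d, s) to a loose identity on X
    -- along p : A → X, r : B → X factors through a unique map T → X
    (∀ (X : Type*) (p : A → X) (r : B → X),
      (∀ (a : A) (e : E), r (s a e) = p a) →
      ∃! t : Quot (cotabRel s) → X,
        (∀ a : A, t (Quot.mk (cotabRel s) (Sum.inl a)) = p a) ∧
        (∀ b : B, t (Quot.mk (cotabRel s) (Sum.inr b)) = r b)) :=
  mealy_cotabulator_general s
end

section
/- A left module structure over a monad (E, d, s, ·, e₀) on A in Mly(Set), carried by an automaton (P, δ : A × P → P, σ : A × P → X) with action ξ : E × P → P satisfying the unit law ξ(e₀, p) = p, associativity ξ(e·e', p) = ξ(e, ξ(e', p)), and the cell axioms σ(a, ξ(e,p)) = σ(s(a,e), p) and δ(a, ξ(e,p)) = ξ(d(a,e), δ(s(a,e), p)), determines a left action of the bicrossed product monoid E ⋈ A* on P, given by ((x, as), p) ↦ ξ(x, δ⁺(as, p)), where δ⁺ is the canonical extension of δ to lists. -/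
/-- The semifree bicrossed product multiplication on `E × List A`. -/
def sfMul {A E : Type*} [Monoid E] (d : A → E → E) (s : A → E → A)
    (p q : E × List A) : E × List A :=
  (p.1 * dPlus d p.2 q.1, odPlus d s p.2 q.1 ++ q.2)

theorem dPlus_append {A P : Type*} (f : A → P → P) (l₁ l₂ : List A) (p : P) :
    dPlus f (l₁ ++ l₂) p = dPlus f l₁ (dPlus f l₂ p) := by
  induction l₁ with
  | nil => rfl
  | cons a as ih => simp only [List.cons_append, dPlus, ih]

theorem dPlus_act {A E P : Type*} (d : A → E → E) (s : A → E → A)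
    (δ : A → P → P) (ξ : E → P → P)
    (hcell_d : ∀ (a : A) (e : E) (p : P), δ a (ξ e p) = ξ (d a e) (δ (s a e) p))
    (as : List A) (e : E) (p : P) :
    dPlus δ as (ξ e p) = ξ (dPlus d as e) (dPlus δ (odPlus d s as e) p) := by
  induction as with
  | nil => rfl
  | cons a as ih => simp only [dPlus, odPlus, ih, hcell_d]

theorem module_gives_bicrossed_action_general {A E P : Type*} [Monoid E]
    (d : A → E → E) (s : A → E → A)
    (δ : A → P → P) (ξ : E → P → P)
    (hξ_one : ∀ p : P, ξ 1 p = p)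
    (hξ_mul : ∀ (e e' : E) (p : P), ξ (e * e') p = ξ e (ξ e' p))
    (hcell_d : ∀ (a : A) (e : E) (p : P), δ a (ξ e p) = ξ (d a e) (δ (s a e) p)) :
    -- ((x, as), p) ↦ ξ x (δ⁺ as p) is a left action of E ⋈ A* on P
    (∀ p : P, ξ (1 : E) (dPlus δ ([] : List A) p) = p) ∧
    (∀ (q q' : E × List A) (p : P),
      ξ (sfMul d s q q').1 (dPlus δ (sfMul d s q q').2 p) =
        ξ q.1 (dPlus δ q.2 (ξ q'.1 (dPlus δ q'.2 p)))) := by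
  refine ⟨hξ_one, fun ⟨x, as⟩ ⟨y, bs⟩ p => ?_⟩
  calc ξ (x * dPlus d as y) (dPlus δ (odPlus d s as y ++ bs) p)
      = ξ x (ξ (dPlus d as y) (dPlus δ (odPlus d s as y) (dPlus δ bs p))) := by
        rw [hξ_mul, dPlus_append]
    _ = ξ x (dPlus δ as (ξ y (dPlus δ bs p))) := by
        rw [dPlus_act d s δ ξ hcell_d]

theorem module_gives_bicrossed_action {A E P X : Type*} [Monoid E]
    (d : A → E → E) (s : A → E → A)
    (hs1 : ∀ a : A, s a 1 = a)
    (hd1 : ∀ a : A, d a 1 = 1)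
    (hs2 : ∀ (a : A) (e e' : E), s a (e * e') = s (s a e) e')
    (hd2 : ∀ (a : A) (e e' : E), d a (e * e') = d a e * d (s a e) e')
    (δ : A → P → P) (σ : A → P → X) (ξ : E → P → P)
    (hξ_one : ∀ p : P, ξ 1 p = p)
    (hξ_mul : ∀ (e e' : E) (p : P), ξ (e * e') p = ξ e (ξ e' p))
    (hcell_s : ∀ (a : A) (e : E) (p : P), σ a (ξ e p) = σ (s a e) p)
    (hcell_d : ∀ (a : A) (e : E) (p : P), δ a (ξ e p) = ξ (d a e) (δ (s a e) p)) :
    -- ((x, as), p) ↦ ξ x (δ⁺ as p) is a left action of E ⋈ A* on P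
    (∀ p : P, ξ (1 : E) (dPlus δ ([] : List A) p) = p) ∧
    (∀ (q q' : E × List A) (p : P),
      ξ (sfMul d s q q').1 (dPlus δ (sfMul d s q q').2 p) =
        ξ q.1 (dPlus δ q.2 (ξ q'.1 (dPlus δ q'.2 p)))) :=
  module_gives_bicrossed_action_general d s δ ξ hξ_one hξ_mul hcell_d
end
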